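/- arXiv:2412.19901 — 3 statements merged into one kernel-verified Lean document; each statement's English description precedes it below -/
import Mathlib

section
/- Let f : ℝ → ℝ be seven times continuously differentiable and fix x∈ℝ. For h≠0 define H(y,h) := f(y) − (h²/24) f''(y) + (7h⁴/5760) f''''(y). Then (H(x+h/2,h) − H(x−h/2,h))/h − f'(x) = O(h⁶) as h → 0; i.e., the A-WENO flux with second- and fourth-derivative correction terms with coefficients 1/24 and 7/5760 yields a flux-difference approximation of f'(x) whose error is of sixth order. -/
/-!
Expand `f`, `f''` and `f⁗` by Taylor's formula at `x` to orders `6`, `4` and `2`, so that all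
remainders, weighted by `1`, `h²` and `h⁴`, are `O(h⁷)`. In the difference of the corrected fluxes
at `x ± h/2` the even powers cancel by symmetry, and the coefficients `1/24` and `7/5760` are
exactly the ones that cancel the `h³` and `h⁵` terms of the central difference of `f`; what is
left is `h f'(x) + O(h⁷)`, and dividing by `h` gives the claim.
-/

open Filter Asymptotics Topology Set
open scoped Nat

section Taylor

variable {E : Type*} [NormedAddCommGroup E] [NormedSpace ℝ E]

theorem taylor_isBigO_univ {f : ℝ → E} {x₀ : ℝ} {n : ℕ} (hf : ContDiff ℝ (n + 1) f) :
    (fun x ↦ f x - taylorWithinEval f n univ x₀ x) =O[𝓝 x₀] fun x ↦ (x - x₀) ^ (n + 1) := by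
  have hlast : (fun x ↦ (((n + 1 : ℝ) * n !)⁻¹ * (x - x₀) ^ (n + 1)) •
      iteratedDerivWithin (n + 1) f univ x₀) =O[𝓝 x₀] fun x ↦ (x - x₀) ^ (n + 1) :=
    (((isBigO_refl _ _).const_mul_left _).smul (isBigO_const_const _ one_ne_zero _)).congr_right
      fun x ↦ by rw [smul_eq_mul, mul_one]
  refine ((taylor_isLittleO_univ hf).isBigO.add hlast).congr_left fun x ↦ ?_
  rw [taylorWithinEval_succ]
  abel

theorem taylor_isBigO_pow_smul_comp_mul {f : ℝ → E} {n : ℕ}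
    (hf : ContDiff ℝ (n + 1) f) (x c : ℝ) (m : ℕ) :
    (fun h : ℝ ↦ h ^ m • (f (x + c * h) - taylorWithinEval f n univ x (x + c * h)))
      =O[𝓝 0] fun h ↦ h ^ (m + n + 1) := by
  have hshift : Tendsto (fun h : ℝ ↦ x + c * h) (𝓝 0) (𝓝 x) :=
    (by fun_prop : Continuous fun h : ℝ ↦ x + c * h).tendsto' 0 x (by simp)
  have hrem := (taylor_isBigO_univ hf).comp_tendsto hshift
  have hpow : (fun h : ℝ ↦ (x + c * h - x) ^ (n + 1)) =O[𝓝 0] fun h ↦ h ^ (n + 1) :=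
    ((isBigO_refl _ _).const_mul_left (c ^ (n + 1))).congr_left fun h ↦ by ring
  refine ((isBigO_refl (fun h : ℝ ↦ h ^ m) _).smul (hrem.trans hpow)).congr_right fun h ↦ ?_
  rw [smul_eq_mul]
  ring

end Taylor

section IteratedDeriv

variable {𝕜 F : Type*} [NontriviallyNormedField 𝕜] [NormedAddCommGroup F] [NormedSpace 𝕜 F]

theorem iteratedDeriv_iteratedDeriv (k m : ℕ) (f : 𝕜 → F) :
    iteratedDeriv k (iteratedDeriv m f) = iteratedDeriv (k + m) f := by
  simp only [iteratedDeriv_eq_iterate, Function.iterate_add_apply]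

theorem ContDiff.iteratedDeriv_of_add {f : 𝕜 → F} {n k : ℕ} (hf : ContDiff 𝕜 (n + k : ℕ) f) :
    ContDiff 𝕜 n (iteratedDeriv k f) := by
  rw [iteratedDeriv_eq_iterate]
  exact hf.iterate_deriv' n k

end IteratedDeriv

theorem isBigO_div_sub_of_isBigO_sub_mul {𝕜 : Type*} [NormedField 𝕜] {g : 𝕜 → 𝕜} {L : 𝕜}
    {n : ℕ} (hg : (fun h ↦ g h - h * L) =O[𝓝 0] fun h ↦ h ^ (n + 1)) :
    (fun h ↦ g h / h - L) =O[𝓝[≠] 0] fun h ↦ h ^ n := by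
  refine ((hg.mono nhdsWithin_le_nhds).mul (isBigO_refl (fun h : 𝕜 ↦ h⁻¹) _)).congr' ?_ ?_ <;>
    filter_upwards [self_mem_nhdsWithin] with h (hh : h ≠ 0)
  · field_simp
  · field_simp
    ring

open Topology Asymptotics in
/-- The A-WENO flux with exact second- and fourth-derivative correction terms
(with coefficients `1/24` and `7/5760`) yields a flux-difference approximation
of `f'(x)` whose error is of sixth order. -/
theorem aweno_exact_corrections_sixth_order
    (f : ℝ → ℝ) (hf : ContDiff ℝ 7 f) (x : ℝ) :
    (fun h : ℝ =>
        ((f (x + h / 2) - h ^ 2 / 24 * iteratedDeriv 2 f (x + h / 2)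
            + 7 * h ^ 4 / 5760 * iteratedDeriv 4 f (x + h / 2))
          - (f (x - h / 2) - h ^ 2 / 24 * iteratedDeriv 2 f (x - h / 2)
            + 7 * h ^ 4 / 5760 * iteratedDeriv 4 f (x - h / 2))) / h
        - deriv f x)
      =O[𝓝[≠] (0 : ℝ)] fun h => h ^ 6 := by
  have hf₀ := fun c ↦ taylor_isBigO_pow_smul_comp_mul (n := 6) hf x c 0
  have hf₂ := fun c ↦ taylor_isBigO_pow_smul_comp_mul (n := 4)
    (ContDiff.iteratedDeriv_of_add (k := 2) hf) x c 2
  have hf₄ := fun c ↦ taylor_isBigO_pow_smul_comp_mul (n := 2)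
    (ContDiff.iteratedDeriv_of_add (k := 4) hf) x c 4
  have hsum := (((hf₀ (1 / 2)).sub (hf₀ (-1 / 2))).sub
    (((hf₂ (1 / 2)).sub (hf₂ (-1 / 2))).const_mul_left (1 / 24))).add
    (((hf₄ (1 / 2)).sub (hf₄ (-1 / 2))).const_mul_left (7 / 5760))
  refine isBigO_div_sub_of_isBigO_sub_mul (hsum.congr_left fun h ↦ ?_)
  simp only [taylor_within_apply, iteratedDerivWithin_univ, iteratedDeriv_iteratedDeriv,
    Finset.sum_range_succ, Finset.sum_range_zero, smul_eq_mul, iteratedDeriv_one, Nat.factorial]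
  ring_nf
end

section
/- Let f : ℝ → ℝ be seven times continuously differentiable and fix x∈ℝ. For h≠0 and y∈ℝ define the finite-difference approximations D₂(y,h) := [−f(y−2h)+16f(y−h)−30f(y)+16f(y+h)−f(y+2h)]/(12h²) and D₄(y,h) := [f(y−2h)−4f(y−h)+6f(y)−4f(y+h)+f(y+2h)]/h⁴, and the corrected flux 𝒦(y,h) := f(y) − (h²/24)D₂(y,h) + (7h⁴/5760)D₄(y,h). Then (𝒦(x+h/2,h) − 𝒦(x−h/2,h))/h − f'(x) = O(h⁵) as h → 0; i.e., the A-WENO flux built from the five-point finite-difference correction terms evaluated at the half-grid points x±h/2, x±3h/2, x±5h/2 approximates f'(x) to fifth order of accuracy. -/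
open Topology Asymptotics Filter Finset
open scoped Nat

/-! Taylor's theorem shows that a stencil `∑ cᵢ f (x + aᵢ h)` whose moments `∑ cᵢ aᵢ ^ k`
vanish for `k ≤ n + 1`, except `∑ cᵢ aᵢ = 1`, equals `h f'(x) + o(h ^ (n + 1))`.
Substituting the five-point formulas for `D₂` and `D₄`, the A-WENO difference quotient is
`h⁻¹` times the stencil with nodes `±1/2, ±3/2, ±5/2` and weights `±75/64, ∓25/384, ±3/640`.
Its odd moments are correct through order five by the choice of weights and its even moments
vanish by antisymmetry, so the quotient approximates `f'(x)` with error `o(h⁵)`. -/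

section Stencil

variable {E : Type*} [NormedAddCommGroup E] [NormedSpace ℝ E]

theorem taylor_comp_const_add_mul_isLittleO {f : ℝ → E} {n : ℕ} (hf : ContDiff ℝ n f)
    (x a : ℝ) :
    (fun h => f (x + a * h) - ∑ k ∈ range (n + 1), ((a * h) ^ k / k !) • iteratedDeriv k f x)
      =o[𝓝 0] fun h => h ^ n := by
  have hline : Tendsto (fun h => x + a * h) (𝓝 0) (𝓝 x) := by
    simpa using (show Continuous fun h : ℝ => x + a * h by fun_prop).tendsto 0
  have hpow : (fun h : ℝ => (x + a * h - x) ^ n) =O[𝓝 0] fun h => h ^ n := by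
    simpa [mul_pow] using (isBigO_refl (fun h : ℝ => h ^ n) _).const_mul_left (a ^ n)
  refine (((taylor_isLittleO_univ hf).comp_tendsto hline).trans_isBigO hpow).congr_left
    fun h => ?_
  simp [taylor_within_apply, iteratedDerivWithin_univ, div_eq_inv_mul]

theorem sum_smul_taylor_of_moments {ι : Type*} [Fintype ι] (c a : ι → ℝ) {m : ℕ} (hm : 1 ≤ m)
    (hmom : ∀ k ≤ m, ∑ i, c i * a i ^ k = if k = 1 then 1 else 0) (D : ℕ → E) (h : ℝ) :
    ∑ i, c i • ∑ k ∈ range (m + 1), ((a i * h) ^ k / k !) • D k = h • D 1 := by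
  calc ∑ i, c i • ∑ k ∈ range (m + 1), ((a i * h) ^ k / k !) • D k
      = ∑ k ∈ range (m + 1), ((∑ i, c i * a i ^ k) * (h ^ k / k !)) • D k := by
        simp only [smul_sum, smul_smul]
        rw [Finset.sum_comm]
        refine sum_congr rfl fun k _ => ?_
        rw [← sum_smul, sum_mul]
        congr 1
        refine sum_congr rfl fun i _ => ?_
        ring
    _ = h • D 1 := by
        rw [sum_eq_single_of_mem 1 (by simp; omega)]
        · rw [hmom 1 hm]
          simp
        · intro k hk hk1
          rw [hmom k (by simp at hk; omega), if_neg hk1, zero_mul, zero_smul]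

theorem stencil_sub_isLittleO {ι : Type*} [Fintype ι] {f : ℝ → E} {n : ℕ}
    (hf : ContDiff ℝ (n + 1) f) (x : ℝ) {c a : ι → ℝ}
    (hmom : ∀ k ≤ n + 1, ∑ i, c i * a i ^ k = if k = 1 then 1 else 0) :
    (fun h => ∑ i, c i • f (x + a i * h) - h • deriv f x) =o[𝓝 0] fun h => h ^ (n + 1) := by
  have hf' : ContDiff ℝ ↑(n + 1) f := by exact_mod_cast hf
  have hrem := IsLittleO.sum fun i (_ : i ∈ univ) =>
    (taylor_comp_const_add_mul_isLittleO hf' x (a i)).const_smul_left (c i)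
  refine hrem.congr_left fun h => ?_
  simp only [Finset.sum_apply, Pi.smul_apply, smul_sub, sum_sub_distrib]
  rw [← iteratedDeriv_one]
  congr 1
  exact sum_smul_taylor_of_moments c a (by omega) hmom (fun k => iteratedDeriv k f x) h

theorem stencil_div_sub_deriv_isLittleO {ι : Type*} [Fintype ι] {f : ℝ → E} {n : ℕ}
    (hf : ContDiff ℝ (n + 1) f) (x : ℝ) {c a : ι → ℝ}
    (hmom : ∀ k ≤ n + 1, ∑ i, c i * a i ^ k = if k = 1 then 1 else 0) :
    (fun h => h⁻¹ • ∑ i, c i • f (x + a i * h) - deriv f x) =o[𝓝[≠] 0] fun h => h ^ n := by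
  have := (isBigO_refl (fun h : ℝ => h⁻¹) (𝓝[≠] 0)).smul_isLittleO
    ((stencil_sub_isLittleO hf x hmom).mono nhdsWithin_le_nhds)
  refine this.congr' ?_ ?_ <;> filter_upwards [self_mem_nhdsWithin] with h (hh : h ≠ 0)
  · simp [smul_sub, smul_smul, hh]
  · rw [smul_eq_mul, pow_succ', inv_mul_cancel_left₀ hh]

end Stencil

noncomputable def awenoWeights : Fin 6 → ℝ :=
  ![75 / 64, -75 / 64, -25 / 384, 25 / 384, 3 / 640, -3 / 640]

noncomputable def awenoNodes : Fin 6 → ℝ := ![1 / 2, -1 / 2, 3 / 2, -3 / 2, 5 / 2, -5 / 2]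

theorem awenoWeights_moments :
    ∀ k ≤ 6, ∑ i, awenoWeights i * awenoNodes i ^ k = if k = 1 then 1 else 0 := by
  intro k hk
  interval_cases k <;> norm_num [Fin.sum_univ_succ, awenoWeights, awenoNodes]

open Topology Asymptotics in
/-- The A-WENO flux built from the five-point finite-difference second- and
fourth-derivative correction terms (evaluated at the half-grid points)
approximates `f'(x)` to fifth order of accuracy. -/
theorem aweno_fd_corrections_fifth_order
    (f : ℝ → ℝ) (hf : ContDiff ℝ 7 f) (x : ℝ)
    (D₂ D₄ 𝒦 : ℝ → ℝ → ℝ)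
    (hD₂ : ∀ y h, D₂ y h =
      (-f (y - 2 * h) + 16 * f (y - h) - 30 * f y + 16 * f (y + h) - f (y + 2 * h))
        / (12 * h ^ 2))
    (hD₄ : ∀ y h, D₄ y h =
      (f (y - 2 * h) - 4 * f (y - h) + 6 * f y - 4 * f (y + h) + f (y + 2 * h)) / h ^ 4)
    (h𝒦 : ∀ y h, 𝒦 y h = f y - h ^ 2 / 24 * D₂ y h + 7 * h ^ 4 / 5760 * D₄ y h) :
    (fun h : ℝ => (𝒦 (x + h / 2) h - 𝒦 (x - h / 2) h) / h - deriv f x)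
      =O[𝓝[≠] (0 : ℝ)] fun h => h ^ 5 := by
  have hf6 : ContDiff ℝ (5 + 1) f := hf.of_le (by norm_num)
  refine (stencil_div_sub_deriv_isLittleO hf6 x awenoWeights_moments).isBigO.congr' ?_ .rfl
  filter_upwards [self_mem_nhdsWithin] with h (hh : h ≠ 0)
  simp only [h𝒦, hD₂, hD₄, Fin.sum_univ_six, awenoWeights, awenoNodes, Matrix.cons_val,
    smul_eq_mul]
  field_simp
  ring_nf
end

section
/- Let d, N be natural numbers, let F : ℝᵈ → ℝᵈ, E : ℝᵈ → ℝᵈ, and M : ℝᵈ → Mat_{d×d}(ℝ) be arbitrary maps, and let U⁻_j, U⁺_j, Û⁻_j, Û⁺_j ∈ ℝᵈ and speeds a⁻_j ≤ 0 ≤ a⁺_j with a⁺_j − a⁻_j > 0 be given for j = 0,…,N. Assume the discrete equilibrium conditions: there exists Ê ∈ ℝᵈ with E(U⁻_j) = E(U⁺_j) = Ê for all j, and Û⁺_j = Û⁻_j for all j. Define B^Ψ_j := F(U⁺_j) − F(U⁻_j) − ½(M(U⁺_j)+M(U⁻_j))·(E(U⁺_j)−E(U⁻_j)) for all j, B_j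 := F(U⁻_j) − F(U⁺_{j−1}) − ½(M(U⁻_j)+M(U⁺_{j−1}))·(E(U⁻_j)−E(U⁺_{j−1})) for j ≥ 1, and recursively R⁻_0 := 0, R⁺_j := R⁻_j + B^Ψ_j, R⁻_j := R⁺_{j−1} + B_j. Set K^±_j := F(U^±_j) − R^±_j and the PCCU numerical flux 𝒦^FV_j := (a⁺_j K⁻_j − a⁻_j K⁺_j)/(a⁺_j − a⁻_j) + (a⁺_j a⁻_j/(a⁺_j − a⁻_j))(Û⁺_j − Û⁻_j). Then K⁻_j = K⁺_j = F(U⁻_0) and hence 𝒦^FV_j = F(U⁻_0) for every j = 0,…,N; in particular the PCCU flux is independent of j, so the flux globalization based well-balanced PCCU scheme exactly preserves the discrete steady state. -/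
/-!
At a discrete steady state the equilibrium variables agree at both ends of every segment of the
path, so each trapezoidal path quadrature `B^Ψ_j` and each in-cell quadrature `B_j` reduces to
the plain jump of `F` across it. The recursion for `R^±` then telescopes to
`R^±_j = F(U^±_j) - F(U⁻_0)`, so every global flux `K^±_j` equals `F(U⁻_0)`; with equal global
fluxes and `Û⁺_j = Û⁻_j` the PCCU flux is their common value.
-/

theorem trapezoidal_quadrature_of_eq {n : Type*} [Fintype n] (F E : (n → ℝ) → n → ℝ)
    (M : (n → ℝ) → Matrix n n ℝ) {u v : n → ℝ} (h : E u = E v) :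
    F u - F v - (1 / 2 : ℝ) • ((M u + M v).mulVec (E u - E v)) = F u - F v := by
  simp [h]

theorem recursive_sum_of_jumps {G : Type*} [AddCommGroup G] (N : ℕ) (f g Rm Rp : ℕ → G)
    (hRm0 : Rm 0 = 0)
    (hRp : ∀ j ≤ N, Rp j = Rm j + (g j - f j))
    (hRm : ∀ j, 1 ≤ j → j ≤ N → Rm j = Rp (j - 1) + (f j - g (j - 1))) :
    ∀ j ≤ N, Rm j = f j - f 0 ∧ Rp j = g j - f 0 := by
  have hRp_of_hRm : ∀ j ≤ N, Rm j = f j - f 0 → Rp j = g j - f 0 := fun j hj hm => by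
    rw [hRp j hj, hm]; abel
  intro j
  induction j with
  | zero => intro hj; exact ⟨by simp [hRm0], hRp_of_hRm 0 hj (by simp [hRm0])⟩
  | succ k ih =>
    intro hj
    have hm : Rm (k + 1) = f (k + 1) - f 0 := by
      rw [hRm (k + 1) (Nat.le_add_left 1 k) hj, Nat.add_sub_cancel, (ih (by omega)).2]; abel
    exact ⟨hm, hRp_of_hRm (k + 1) hj hm⟩

theorem centralUpwind_flux_of_eq {𝕜 V : Type*} [Field 𝕜] [AddCommGroup V] [Module 𝕜 V]
    {ap am : 𝕜} (h : ap - am ≠ 0) (c u : V) (t : 𝕜) :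
    (ap - am)⁻¹ • (ap • c - am • c) + t • (u - u) = c := by
  rw [← sub_smul, smul_smul, inv_mul_cancel₀ h, sub_self, smul_zero, one_smul, add_zero]

theorem pccu_well_balanced_general
    (d N : ℕ)
    (F E : (Fin d → ℝ) → (Fin d → ℝ))
    (M : (Fin d → ℝ) → Matrix (Fin d) (Fin d) ℝ)
    (Um Up Uhm Uhp : ℕ → Fin d → ℝ)
    (am ap : ℕ → ℝ)
    (hgap : ∀ j ≤ N, 0 < ap j - am j)
    (Ehat : Fin d → ℝ)
    (hEm : ∀ j ≤ N, E (Um j) = Ehat) (hEp : ∀ j ≤ N, E (Up j) = Ehat)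
    (hUh : ∀ j ≤ N, Uhp j = Uhm j)
    (Bψ B : ℕ → Fin d → ℝ)
    (hBψ : ∀ j ≤ N, Bψ j = F (Up j) - F (Um j)
        - (1 / 2 : ℝ) • ((M (Up j) + M (Um j)).mulVec (E (Up j) - E (Um j))))
    (hB : ∀ j, 1 ≤ j → j ≤ N → B j = F (Um j) - F (Up (j - 1))
        - (1 / 2 : ℝ) • ((M (Um j) + M (Up (j - 1))).mulVec (E (Um j) - E (Up (j - 1)))))
    (Rm Rp : ℕ → Fin d → ℝ)
    (hRm0 : Rm 0 = 0)
    (hRp : ∀ j ≤ N, Rp j = Rm j + Bψ j)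
    (hRm : ∀ j, 1 ≤ j → j ≤ N → Rm j = Rp (j - 1) + B j)
    (Km Kp KFV : ℕ → Fin d → ℝ)
    (hKm : ∀ j ≤ N, Km j = F (Um j) - Rm j)
    (hKp : ∀ j ≤ N, Kp j = F (Up j) - Rp j)
    (hKFV : ∀ j ≤ N, KFV j =
        (ap j - am j)⁻¹ • (ap j • Km j - am j • Kp j)
          + (ap j * am j / (ap j - am j)) • (Uhp j - Uhm j)) :
    ∀ j ≤ N, Km j = F (Um 0) ∧ Kp j = F (Um 0) ∧ KFV j = F (Um 0) := by
  have hR := recursive_sum_of_jumps N (F ∘ Um) (F ∘ Up) Rm Rp hRm0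
    (fun j hj => by
      rw [hRp j hj, hBψ j hj,
        trapezoidal_quadrature_of_eq F E M (by rw [hEp j hj, hEm j hj])]; rfl)
    (fun j hj1 hjN => by
      rw [hRm j hj1 hjN, hB j hj1 hjN,
        trapezoidal_quadrature_of_eq F E M (by rw [hEm j hjN, hEp (j - 1) (by omega)])]; rfl)
  intro j hj
  have hKm_eq : Km j = F (Um 0) := by
    rw [hKm j hj, (hR j hj).1]; exact sub_sub_cancel _ _
  have hKp_eq : Kp j = F (Um 0) := by
    rw [hKp j hj, (hR j hj).2]; exact sub_sub_cancel _ _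
  refine ⟨hKm_eq, hKp_eq, ?_⟩
  rw [hKFV j hj, hKm_eq, hKp_eq, hUh j hj]
  exact centralUpwind_flux_of_eq (hgap j hj).ne' _ _ _

/-- The flux globalization based well-balanced PCCU scheme exactly preserves
discrete steady states: if all the one-sided point values are in discrete
equilibrium (the equilibrium variables `E(U^±_j)` all coincide and
`Û⁺_j = Û⁻_j`), then all the global fluxes `K^±_j` and hence all the PCCU
numerical fluxes `𝒦^FV_j` are equal to the single constant `F(U⁻_0)`. -/
theorem pccu_well_balanced
    (d N : ℕ)
    (F E : (Fin d → ℝ) → (Fin d → ℝ))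
    (M : (Fin d → ℝ) → Matrix (Fin d) (Fin d) ℝ)
    (Um Up Uhm Uhp : ℕ → Fin d → ℝ)
    (am ap : ℕ → ℝ)
    (ham : ∀ j ≤ N, am j ≤ 0) (hap : ∀ j ≤ N, 0 ≤ ap j)
    (hgap : ∀ j ≤ N, 0 < ap j - am j)
    (Ehat : Fin d → ℝ)
    (hEm : ∀ j ≤ N, E (Um j) = Ehat) (hEp : ∀ j ≤ N, E (Up j) = Ehat)
    (hUh : ∀ j ≤ N, Uhp j = Uhm j)
    (Bψ B : ℕ → Fin d → ℝ)
    (hBψ : ∀ j ≤ N, Bψ j = F (Up j) - F (Um j)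
        - (1 / 2 : ℝ) • ((M (Up j) + M (Um j)).mulVec (E (Up j) - E (Um j))))
    (hB : ∀ j, 1 ≤ j → j ≤ N → B j = F (Um j) - F (Up (j - 1))
        - (1 / 2 : ℝ) • ((M (Um j) + M (Up (j - 1))).mulVec (E (Um j) - E (Up (j - 1)))))
    (Rm Rp : ℕ → Fin d → ℝ)
    (hRm0 : Rm 0 = 0)
    (hRp : ∀ j ≤ N, Rp j = Rm j + Bψ j)
    (hRm : ∀ j, 1 ≤ j → j ≤ N → Rm j = Rp (j - 1) + B j)
    (Km Kp KFV : ℕ → Fin d → ℝ)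
    (hKm : ∀ j ≤ N, Km j = F (Um j) - Rm j)
    (hKp : ∀ j ≤ N, Kp j = F (Up j) - Rp j)
    (hKFV : ∀ j ≤ N, KFV j =
        (ap j - am j)⁻¹ • (ap j • Km j - am j • Kp j)
          + (ap j * am j / (ap j - am j)) • (Uhp j - Uhm j)) :
    ∀ j ≤ N, Km j = F (Um 0) ∧ Kp j = F (Um 0) ∧ KFV j = F (Um 0) :=
  pccu_well_balanced_general d N F E M Um Up Uhm Uhp am ap hgap Ehat hEm hEp hUh Bψ B hBψ hB Rm Rp
    hRm0 hRp hRm Km Kp KFV hKm hKp hKFV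
end
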